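/- If d, t2, t3, r are nonnegative integers satisfying t2 + 3*t3 = d*(d-1)/2 and r^2 - r*(d-1) + (d-1)^2 = t2 + 4*t3 + 1, then 4*t3 ≥ d^2 - 4*d - 1. -/
import Mathlib


theorem stmt_0 (d t2 t3 r : ℤ) (hd : 0 ≤ d) (ht2 : 0 ≤ t2) (ht3 : 0 ≤ t3) (hr : 0 ≤ r)
    (hcomb : t2 + 3 * t3 = d * (d - 1) / 2)
    (heq : r ^ 2 - r * (d - 1) + (d - 1) ^ 2 = t2 + 4 * t3 + 1) :
    4 * t3 ≥ d ^ 2 - 4 * d - 1 := by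
  have h2 : 2 ∣ d * (d - 1) := by
    rcases Int.even_or_odd d with h | h
    · exact Dvd.dvd.mul_right h.two_dvd _
    · exact Dvd.dvd.mul_left (h.sub_odd odd_one).two_dvd _
  have hmul : d * (d - 1) / 2 * 2 = d * (d - 1) := Int.ediv_mul_cancel h2
  nlinarith [sq_nonneg (2 * r - d + 1)]
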